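/- Let k be a field of characteristic 0 and n ≥ 2 an integer, and let A = kQ/(p₂p₁) be the gentle algebra of the cylinder dissection together with the bilinear map μ̃ determined by μ̃(p₂,p₁) = q̄. Then the deformed product a ∗ b := a·b + μ̃(a,b) on the underlying k-vector space of A is associative, and the original unit 1 of A is also a two-sided unit for ∗; hence (A, ∗) is a unital associative k-algebra (a strict deformation of A in the direction of μ̃). -/

import Mathlib

/-!
`CylIdx n` indexes the `k`-basis of the gentle algebra `A = kQ/(p₂p₁)` of the cylinder
dissection: the quiver `Q` has vertices `u₀, …, u_{n-1}, v` (encoded as `0, …, n-1, n`),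
arrows `q_i : u_{i-1} → u_i` for `1 ≤ i ≤ n-1`, `p₁ : u₀ → v` and `p₂ : v → u_{n-1}`.
The basis of `A` consists of the trivial paths `e x`, the arrows `p₁`, `p₂`, and the
paths `q i j = q_j ⋯ q_i` for `1 ≤ i ≤ j ≤ n-1`.
-/
inductive CylIdx (n : ℕ) : Type
  | e : (x : ℕ) → x ≤ n → CylIdx n
  | p1 : CylIdx n
  | p2 : CylIdx n
  | q : (i j : ℕ) → 1 ≤ i → i ≤ j → j ≤ n - 1 → CylIdx n

namespace CylIdx

/-- Source vertex of a basis path (vertex `u_x` is encoded `x`, the vertex `v` as `n`). -/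
def src {n : ℕ} : CylIdx n → ℕ
  | e x _ => x
  | p1 => 0
  | p2 => n
  | q i _ _ _ _ => i - 1

/-- Target vertex of a basis path. -/
def tgt {n : ℕ} : CylIdx n → ℕ
  | e x _ => x
  | p1 => n
  | p2 => n - 1
  | q _ j _ _ _ => j

end CylIdx

/-- Structure constants of `A = kQ/(p₂p₁)`: the product `b · a` of two basis paths is a
basis path (the concatenation) or zero; note `p₂ · p₁ = 0` is the gentle relation. -/
def cylMul {n : ℕ} : CylIdx n → CylIdx n → Option (CylIdx n)
  | .e x _, a => if x = a.tgt then some a else none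
  | b, .e x _ => if b.src = x then some b else none
  | .q i' j' _ h2 h3, .q i j g1 g2 _ =>
      if h : i' = j + 1 then some (.q i j' g1 (by omega) h3) else none
  | _, _ => none


/-!
The map `μ̃` is a Hochschild 2-cocycle of `A`: on basis paths, the only nonzero terms of
`a μ̃(b,c) - μ̃(ab,c) + μ̃(a,bc) - μ̃(a,b) c` occur for the triples `(p₂, p₁, e_{u₀})`,
`(e_{u_{n-1}}, p₂, p₁)` and `(p₂, e_v, p₁)`, and there they cancel in pairs. Moreover `μ̃ ∘ μ̃`
vanishes in either slot, since the value `q̄` of `μ̃` is neither `p₂` nor `p₁`. These two facts are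
exactly what the associativity of `a·b + μ̃(a,b)` amounts to. Unitality holds because `μ̃` vanishes
on the trivial paths, whose sum is `1`.
-/

section Deformation

variable {k A : Type*} [CommSemiring k] [Semiring A] [Algebra k A]

def deformedMul (μ : A →ₗ[k] A →ₗ[k] A) : A →ₗ[k] A →ₗ[k] A := LinearMap.mul k A + μ

@[simp]
theorem deformedMul_apply (μ : A →ₗ[k] A →ₗ[k] A) (a b : A) :
    deformedMul μ a b = a * b + μ a b := rfl

theorem deformedMul_assoc_of_cocycle {μ : A →ₗ[k] A →ₗ[k] A} {a b c : A}
    (hcocycle : μ a b * c + μ (a * b) c = a * μ b c + μ a (b * c))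
    (hleft : μ (μ a b) c = 0) (hright : μ a (μ b c) = 0) :
    deformedMul μ (deformedMul μ a b) c = deformedMul μ a (deformedMul μ b c) := by
  simp only [deformedMul_apply, map_add, LinearMap.add_apply, hleft, hright, add_zero, mul_assoc,
    add_assoc]
  rw [add_comm (μ (a * b) c), hcocycle, add_comm (a * μ b c)]

end Deformation

theorem LinearMap.assoc_of_basis {R M ι : Type*} [CommSemiring R] [AddCommMonoid M] [Module R M]
    (b : Module.Basis ι R M) (m : M →ₗ[R] M →ₗ[R] M)
    (h : ∀ i j l, m (m (b i) (b j)) (b l) = m (b i) (m (b j) (b l))) (x y z : M) :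
    m (m x y) z = m x (m y z) := by
  have : m.compr₂ m = ((LinearMap.llcomp R M M M).comp m).compl₂ m :=
    b.ext fun i => b.ext fun j => b.ext fun l => h i j l
  exact congr($this x y z)

def CylIdx.qbar {n : ℕ} (h : 1 ≤ n - 1) : CylIdx n := .q 1 (n - 1) le_rfl h le_rfl

open CylIdx

section CylinderProduct

open Classical

variable {n : ℕ}

theorem cylMul_eq_some_p1_iff (a b : CylIdx n) :
    cylMul a b = some .p1 ↔ (a = .e n le_rfl ∧ b = .p1) ∨ (a = .p1 ∧ b = .e 0 (Nat.zero_le n)) := by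
  cases a <;> cases b <;> simp only [cylMul, src, tgt] <;> grind

theorem cylMul_eq_some_p2_iff (a b : CylIdx n) :
    cylMul a b = some .p2 ↔
      (a = .e (n - 1) (Nat.sub_le n 1) ∧ b = .p2) ∨ (a = .p2 ∧ b = .e n le_rfl) := by
  cases a <;> cases b <;> simp only [cylMul, src, tgt] <;> grind

theorem cylMul_qbar_left (h : 1 ≤ n - 1) (c : CylIdx n) :
    cylMul (qbar h) c = if c = .e 0 (Nat.zero_le n) then some (qbar h) else none := by
  cases c <;> simp only [cylMul, src, qbar] <;> grind

theorem cylMul_qbar_right (h : 1 ≤ n - 1) (a : CylIdx n) :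
    cylMul a (qbar h) = if a = .e (n - 1) (Nat.sub_le n 1) then some (qbar h) else none := by
  cases a <;> simp only [cylMul, tgt, qbar] <;> grind

variable {k A : Type*} [CommSemiring k] [Semiring A] [Algebra k A]
  (B : Module.Basis (CylIdx n) k A) {μ : A →ₗ[k] A →ₗ[k] A} {h : 1 ≤ n - 1}

theorem mu_elim_left
    (hμ : ∀ a b, μ (B a) (B b) = if a = .p2 ∧ b = .p1 then B (qbar h) else 0)
    (o : Option (CylIdx n)) (c : CylIdx n) :
    μ (o.elim 0 B) (B c) = if o = some .p2 ∧ c = .p1 then B (qbar h) else 0 := by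
  cases o <;> simp [hμ]

theorem mu_elim_right
    (hμ : ∀ a b, μ (B a) (B b) = if a = .p2 ∧ b = .p1 then B (qbar h) else 0)
    (a : CylIdx n) (o : Option (CylIdx n)) :
    μ (B a) (o.elim 0 B) = if a = .p2 ∧ o = some .p1 then B (qbar h) else 0 := by
  cases o <;> simp [hμ]

theorem mu_cocycle_basis
    (hmul : ∀ b a : CylIdx n, B b * B a = (cylMul b a).elim 0 B)
    (hμ : ∀ a b, μ (B a) (B b) = if a = .p2 ∧ b = .p1 then B (qbar h) else 0)
    (a b c : CylIdx n) :
    μ (B a) (B b) * B c + μ (B a * B b) (B c) = B a * μ (B b) (B c) + μ (B a) (B b * B c) := by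
  rw [hmul a b, hmul b c, hμ a b, hμ b c, ite_mul, zero_mul, mul_ite, mul_zero, hmul _ c, hmul a _,
    cylMul_qbar_left, cylMul_qbar_right, mu_elim_left B hμ, mu_elim_right B hμ]
  simp only [cylMul_eq_some_p2_iff, cylMul_eq_some_p1_iff]
  split_ifs <;> simp_all

theorem mu_basis_left_eq_zero
    (hμ : ∀ a b, μ (B a) (B b) = if a = .p2 ∧ b = .p1 then B (qbar h) else 0)
    {a : CylIdx n} (ha : a ≠ .p2) : μ (B a) = 0 :=
  B.ext fun b => by simp [hμ, ha]

theorem mu_basis_right_eq_zero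
    (hμ : ∀ a b, μ (B a) (B b) = if a = .p2 ∧ b = .p1 then B (qbar h) else 0)
    {c : CylIdx n} (hc : c ≠ .p1) (x : A) : μ x (B c) = 0 := by
  have : μ.flip (B c) = 0 := B.ext fun b => by simp [hμ, hc]
  exact congr($this x)

theorem mu_mu_basis_left_eq_zero
    (hμ : ∀ a b, μ (B a) (B b) = if a = .p2 ∧ b = .p1 then B (qbar h) else 0)
    (a b : CylIdx n) (x : A) : μ (μ (B a) (B b)) x = 0 := by
  rw [hμ]
  split_ifs
  · rw [mu_basis_left_eq_zero B hμ (by simp [qbar]), LinearMap.zero_apply]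
  · simp

theorem mu_mu_basis_right_eq_zero
    (hμ : ∀ a b, μ (B a) (B b) = if a = .p2 ∧ b = .p1 then B (qbar h) else 0)
    (x : A) (b c : CylIdx n) : μ x (μ (B b) (B c)) = 0 := by
  rw [hμ]
  split_ifs
  · exact mu_basis_right_eq_zero B hμ (by simp [qbar]) x
  · simp

end CylinderProduct

/-- **The deformed product is associative and unital.** On the gentle algebra
`A = kQ/(p₂p₁)` of the cylinder dissection, the deformed product `a ∗ b := a·b + μ̃(a,b)`
is associative and has the original unit `1` of `A` as a two-sided unit; hence `(A, ∗)`
is a unital associative `k`-algebra (a strict deformation of `A` in the direction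
of `μ̃`). -/
theorem cylinder_deformed_product_associative_unital
    (k : Type*) [Field k]
    (n : ℕ) (hn : 2 ≤ n)
    (A : Type*) [Ring A] [Algebra k A]
    (B : Module.Basis (CylIdx n) k A)
    (hmul : ∀ b a : CylIdx n, B b * B a = (cylMul b a).elim 0 B)
    (hone : (1 : A) = ∑ x ∈ (Finset.range (n + 1)).attach,
      B (.e x.1 (by have := Finset.mem_range.mp x.2; omega)))
    (μ : A →ₗ[k] A →ₗ[k] A)
    (hμ1 : μ (B .p2) (B .p1) = B (.q 1 (n - 1) le_rfl (by omega) le_rfl))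
    (hμ0 : ∀ b a : CylIdx n, ¬(b = .p2 ∧ a = .p1) → μ (B b) (B a) = 0) :
    (∀ a b c : A,
        (a * b + μ a b) * c + μ (a * b + μ a b) c
          = a * (b * c + μ b c) + μ a (b * c + μ b c))
      ∧ (∀ a : A, 1 * a + μ 1 a = a ∧ a * 1 + μ a 1 = a) := by
  classical
  have hq : 1 ≤ n - 1 := by omega
  have hμ : ∀ a b, μ (B a) (B b) = if a = .p2 ∧ b = .p1 then B (qbar hq) else 0 := by
    intro a b
    split_ifs with hab
    · obtain ⟨rfl, rfl⟩ := hab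
      exact hμ1
    · exact hμ0 a b hab
  have hμ_one_left : μ 1 = 0 := by
    rw [hone, map_sum]
    exact Finset.sum_eq_zero fun x _ => mu_basis_left_eq_zero B hμ (by simp)
  have hμ_one_right (a : A) : μ a 1 = 0 := by
    rw [hone, map_sum]
    exact Finset.sum_eq_zero fun x _ => mu_basis_right_eq_zero B hμ (by simp) a
  refine ⟨fun a b c => ?_, fun a => ⟨by simp [hμ_one_left], by simp [hμ_one_right]⟩⟩
  exact LinearMap.assoc_of_basis B (deformedMul μ) (fun i j l =>
    deformedMul_assoc_of_cocycle (mu_cocycle_basis B hmul hμ i j l)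
      (mu_mu_basis_left_eq_zero B hμ i j _) (mu_mu_basis_right_eq_zero B hμ _ j l)) a b c
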